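/- Let G be a group generated by a finite symmetric set S, let d, w ∈ ℕ, and let A be a d×d matrix over ℂ[G] whose entries all have support contained in B_w. For every finite F ⊆ G: W(F) equals both V(F) ∩ {f | every coordinate of f is supported in Ω_w(F)} and Z(F) ∩ {f | every coordinate of f is supported in Ω_w(F)}; consequently dim V(F) ≤ dim W(F) + d·(|F| − |Ω_w(F)|) and dim Z(F) ≤ dim W(F) + d·(|B_w(F)| − |Ω_w(F)|). -/

import Mathlib

open Pointwise Filter Topology

section Defs

variable {G : Type*} [Group G]

/-- The word ball of radius `k` with respect to the generating set `S`. -/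
noncomputable def wball (S : Finset G) (k : ℕ) : Finset G :=
  letI := Classical.decEq G
  (insert (1 : G) S) ^ k

/-- The `k`-neighborhood `B_k(F) = B_k * F` of a finite set `F`. -/
noncomputable def wnbhd (S : Finset G) (k : ℕ) (F : Finset G) : Finset G :=
  letI := Classical.decEq G
  wball S k * F

/-- The `k`-interior `Ω_k(F)` of a finite set `F`. -/
noncomputable def winter (S : Finset G) (k : ℕ) (F : Finset G) : Finset G :=
  letI := Classical.decEq G
  F.filter fun p => wball S k * {p} ⊆ F

/-- The boundary `∂F` of a finite set `F`. -/
noncomputable def wbdry (S : Finset G) (F : Finset G) : Finset G :=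
  letI := Classical.decEq G
  F.filter fun p => ∃ s ∈ S, s * p ∉ F

/-- `S` is a finite symmetric generating set. -/
def IsSymmGen (S : Finset G) : Prop :=
  (∀ s ∈ S, s⁻¹ ∈ S) ∧ Subgroup.closure (S : Set G) = ⊤

/-- A Følner exhaustion of `G`. -/
def IsFolnerExhaustion (S : Finset G) (F : ℕ → Finset G) : Prop :=
  (1 : G) ∈ F 0 ∧ Monotone F ∧ (∀ g : G, ∃ n, g ∈ F n) ∧
    Filter.Tendsto (fun n => ((wbdry S (F n)).card : ℝ) / ((F n).card : ℝ))
      Filter.atTop (nhds 0)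

variable {d : ℕ}

/-- The space of vectors supported in `Fs` such that `A.mulVec f` vanishes on `Fv`. -/
noncomputable def kerOn (A : Matrix (Fin d) (Fin d) (MonoidAlgebra ℂ G))
    (Fs Fv : Finset G) : Submodule ℂ (Fin d → MonoidAlgebra ℂ G) where
  carrier := {f | (∀ i, (f i).coeff.support ⊆ Fs) ∧ ∀ i, ∀ g ∈ Fv, (A.mulVec f i).coeff g = 0}
  zero_mem' := ⟨fun i => by simp, fun i g hg => by simp [Matrix.mulVec_zero]⟩
  add_mem' := by
    classical
    rintro f g ⟨hf1, hf2⟩ ⟨hg1, hg2⟩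
    constructor
    · intro i
      exact Finsupp.support_add.trans (Finset.union_subset (hf1 i) (hg1 i))
    · intro i x hx
      have h : A.mulVec (f + g) = A.mulVec f + A.mulVec g := Matrix.mulVec_add A f g
      rw [h]
      show (A.mulVec f i + A.mulVec g i).coeff x = 0
      rw [MonoidAlgebra.coeff_add, Finsupp.add_apply, hf2 i x hx, hg2 i x hx, add_zero]
  smul_mem' := by
    classical
    rintro c f ⟨hf1, hf2⟩
    constructor
    · intro i
      exact (Finsupp.support_smul).trans (hf1 i)
    · intro i x hx
      have h : A.mulVec (c • f) = c • A.mulVec f := Matrix.mulVec_smul A c f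
      rw [h]
      show (c • A.mulVec f i).coeff x = 0
      rw [MonoidAlgebra.coeff_smul, Finsupp.smul_apply, hf2 i x hx, smul_zero]

/-- The space of vectors supported in `Fs` with `A.mulVec f = 0`. -/
noncomputable def kerAll (A : Matrix (Fin d) (Fin d) (MonoidAlgebra ℂ G))
    (Fs : Finset G) : Submodule ℂ (Fin d → MonoidAlgebra ℂ G) where
  carrier := {f | (∀ i, (f i).coeff.support ⊆ Fs) ∧ A.mulVec f = 0}
  zero_mem' := ⟨fun i => by simp, Matrix.mulVec_zero A⟩
  add_mem' := by
    classical
    rintro f g ⟨hf1, hf2⟩ ⟨hg1, hg2⟩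
    exact ⟨fun i => Finsupp.support_add.trans (Finset.union_subset (hf1 i) (hg1 i)),
      by rw [Matrix.mulVec_add, hf2, hg2, add_zero]⟩
  smul_mem' := by
    classical
    rintro c f ⟨hf1, hf2⟩
    exact ⟨fun i => (Finsupp.support_smul).trans (hf1 i),
      by rw [Matrix.mulVec_smul, hf2, smul_zero]⟩

/-- `V(F)`. -/
noncomputable def VSpace (A : Matrix (Fin d) (Fin d) (MonoidAlgebra ℂ G)) (F : Finset G) :
    Submodule ℂ (Fin d → MonoidAlgebra ℂ G) :=
  kerOn A F F

/-- `Z(F)`. -/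
noncomputable def ZSpace (S : Finset G) (w : ℕ) (A : Matrix (Fin d) (Fin d) (MonoidAlgebra ℂ G))
    (F : Finset G) : Submodule ℂ (Fin d → MonoidAlgebra ℂ G) :=
  kerOn A (wnbhd S w F) F

/-- `W(F)`. -/
noncomputable def WSpace (S : Finset G) (w : ℕ) (A : Matrix (Fin d) (Fin d) (MonoidAlgebra ℂ G))
    (F : Finset G) : Submodule ℂ (Fin d → MonoidAlgebra ℂ G) :=
  kerAll A (winter S w F)

/-- `A.mulVec` as a `ℂ`-linear map. -/
noncomputable def mulVecL {R : Type*} [Ring R] [Algebra ℂ R] {d : ℕ}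
    (A : Matrix (Fin d) (Fin d) R) : (Fin d → R) →ₗ[ℂ] (Fin d → R) where
  toFun := A.mulVec
  map_add' := Matrix.mulVec_add A
  map_smul' c v := Matrix.mulVec_smul A c v

/-- Coordinatewise restriction to `F` (multiplication by the indicator of `F`). -/
noncomputable def restrictTo (d : ℕ) (F : Finset G) :
    (Fin d → MonoidAlgebra ℂ G) →ₗ[ℂ] (Fin d → MonoidAlgebra ℂ G) :=
  letI := Classical.decEq G
  { toFun := fun f i => MonoidAlgebra.ofCoeff ((f i).coeff.filter (· ∈ F))
    map_add' := fun f g => by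
      funext i
      exact congrArg MonoidAlgebra.ofCoeff Finsupp.filter_add
    map_smul' := fun c f => by
      funext i
      exact congrArg MonoidAlgebra.ofCoeff Finsupp.filter_smul }

end Defs

section Tiling

variable {ι α : Type*}

/-- An `ε`-disjoint family of finite sets. -/
def EpsDisjoint (I : Finset ι) (A : ι → Finset α) (ε : ℝ) : Prop :=
  ∃ Ab : ι → Finset α, (∀ i ∈ I, Ab i ⊆ A i) ∧
    (∀ i ∈ I, ((1 - ε) * (A i).card : ℝ) ≤ ((Ab i).card : ℝ)) ∧
    ∀ i ∈ I, ∀ j ∈ I, i ≠ j → Disjoint (Ab i) (Ab j)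

/-- The family `(A i)_{i ∈ I}` `a`-covers `X`. -/
def CoversFrac (I : Finset ι) (A : ι → Finset α) (X : Finset α) (a : ℝ) : Prop :=
  letI := Classical.decEq α
  (a * X.card : ℝ) ≤ ((X ∩ I.biUnion A).card : ℝ)

/-- The family `(A i)_{i ∈ I}` `δ`-evenly covers `X`. -/
def EvenCovering (I : Finset ι) (A : ι → Finset α) (X : Finset α) (δ : ℝ) : Prop :=
  letI := Classical.decEq α
  ∃ M : ℕ, 1 ≤ M ∧ (∀ p ∈ X, (I.filter fun i => p ∈ A i).card ≤ M) ∧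
    ((1 - δ) * M * X.card : ℝ) ≤ ∑ i ∈ I, ((A i).card : ℝ)

/-- The right translate `H·x`. -/
noncomputable def rtrans [Mul α] (H : Finset α) (x : α) : Finset α :=
  letI := Classical.decEq α
  H.image (· * x)

end Tiling

section Supp

variable {G : Type*} [Group G]

/-- Vectors all of whose coordinates are supported in `F`. -/
noncomputable def suppIn (d : ℕ) (F : Finset G) :
    Submodule ℂ (Fin d → MonoidAlgebra ℂ G) where
  carrier := {f | ∀ i, (f i).coeff.support ⊆ F}
  zero_mem' := fun i => by simp
  add_mem' := by
    classical
    intro f g hf hg i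
    exact Finsupp.support_add.trans (Finset.union_subset (hf i) (hg i))
  smul_mem' := fun c f hf i => (Finsupp.support_smul).trans (hf i)

end Supp

/-!
Since the entries of `A` are supported in `B_w`, the vector `A f` of an `f` supported in the
interior `Ω_w(F)` is supported in `B_w · Ω_w(F) ⊆ F`; so on such `f`, vanishing of `A f` on `F`
already forces `A f = 0`. For the dimension bounds, the coefficients of `f` at the points of
`F \ Ω_w(F)` (resp. `B_w(F) \ Ω_w(F)`) give a linear map into a space of dimension
`d · (|F| - |Ω_w(F)|)` (resp. `d · (|B_w(F)| - |Ω_w(F)|)`) whose kernel on `V(F)` (resp. `Z(F)`)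
is `W(F)`.
-/

section WordBall

variable {G : Type*} [Group G] (S : Finset G) (w : ℕ) (F : Finset G)

lemma winter_subset : winter S w F ⊆ F := by
  classical
  unfold winter
  exact Finset.filter_subset _ F

lemma one_mem_wball : (1 : G) ∈ wball S w := by
  classical
  exact Finset.one_mem_pow (Finset.mem_insert_self 1 S)

lemma subset_wnbhd : F ⊆ wnbhd S w F := by
  classical
  intro g hg
  unfold wnbhd
  simpa using Finset.mul_mem_mul (one_mem_wball S w) hg

lemma winter_subset_wnbhd : winter S w F ⊆ wnbhd S w F :=
  (winter_subset S w F).trans (subset_wnbhd S w F)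

lemma mul_mem_of_mem_wball_of_mem_winter :
    ∀ s ∈ wball S w, ∀ p ∈ winter S w F, s * p ∈ F := by
  classical
  intro s hs p hp
  unfold winter at hp
  exact (Finset.mem_filter.1 hp).2 (Finset.mul_mem_mul hs (Finset.mem_singleton_self p))

end WordBall

section SupportedVectors

variable {G : Type*} {d : ℕ}

lemma mem_suppIn {F : Finset G} {f : Fin d → MonoidAlgebra ℂ G} :
    f ∈ suppIn d F ↔ ∀ i, (f i).coeff.support ⊆ F :=
  Iff.rfl

lemma finrank_le_finrank_inf_suppIn_add (P : Submodule ℂ (Fin d → MonoidAlgebra ℂ G))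
    {T Ω : Finset G} (hΩT : Ω ⊆ T) (hP : P ≤ suppIn d T) :
    Module.finrank ℂ P ≤
      Module.finrank ℂ ↥(P ⊓ suppIn d Ω) + d * (T.card - Ω.card) := by
  classical
  by_cases hfin : FiniteDimensional ℂ P
  swap
  · rw [Module.finrank_of_infinite_dimensional hfin]
    exact Nat.zero_le _
  let φ : P →ₗ[ℂ] (Fin d × ↥(T \ Ω) → ℂ) :=
    { toFun := fun f ip => ((f : Fin d → MonoidAlgebra ℂ G) ip.1).coeff ip.2
      map_add' := fun _ _ => rfl
      map_smul' := fun _ _ => rfl }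
  have hker : LinearMap.ker φ = (P ⊓ suppIn d Ω).comap P.subtype := by
    ext f
    simp only [LinearMap.mem_ker, Submodule.mem_comap, Submodule.mem_inf, Submodule.coe_subtype,
      mem_suppIn]
    constructor
    · intro hφ
      refine ⟨f.2, fun i x hx => by_contra fun hxΩ => Finsupp.mem_support_iff.1 hx ?_⟩
      exact congrFun hφ (i, ⟨x, Finset.mem_sdiff.2 ⟨hP f.2 i hx, hxΩ⟩⟩)
    · rintro ⟨-, hf⟩
      funext ⟨i, x⟩
      exact Finsupp.notMem_support_iff.1 fun hx => (Finset.mem_sdiff.1 x.2).2 (hf i hx)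
  have hker_rank :
      Module.finrank ℂ (LinearMap.ker φ) = Module.finrank ℂ ↥(P ⊓ suppIn d Ω) := by
    rw [hker]
    exact (Submodule.comapSubtypeEquivOfLe inf_le_left).finrank_eq
  have hrange_rank : Module.finrank ℂ (LinearMap.range φ) ≤ d * (T.card - Ω.card) := by
    refine (Submodule.finrank_le _).trans_eq ?_
    rw [Module.finrank_fintype_fun_eq_card, Fintype.card_prod, Fintype.card_fin,
      Fintype.card_coe, Finset.card_sdiff_of_subset hΩT]
  have := φ.finrank_range_add_finrank_ker
  omega

end SupportedVectors

lemma MonoidAlgebra.support_coeff_mulVec_subset {k G m n : Type*} [Semiring k] [Monoid G]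
    [DecidableEq G] [Fintype n] {A : Matrix m n (MonoidAlgebra k G)} {B Ω : Finset G}
    (hA : ∀ i j, (A i j).coeff.support ⊆ B) {f : n → MonoidAlgebra k G}
    (hf : ∀ j, (f j).coeff.support ⊆ Ω) (i : m) :
    (A.mulVec f i).coeff.support ⊆ B * Ω := by
  rw [Matrix.mulVec, dotProduct, MonoidAlgebra.coeff_sum]
  refine Finsupp.support_finsetSum.trans (Finset.biUnion_subset.2 fun j _ => ?_)
  exact (support_coeff_mul_subset _ _).trans (Finset.mul_subset_mul (hA i j) (hf j))

section Kernels

variable {G : Type*} [Group G] {d : ℕ}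

lemma mem_kerOn {A : Matrix (Fin d) (Fin d) (MonoidAlgebra ℂ G)} {Fs Fv : Finset G}
    {f : Fin d → MonoidAlgebra ℂ G} :
    f ∈ kerOn A Fs Fv ↔
      (∀ i, (f i).coeff.support ⊆ Fs) ∧ ∀ i, ∀ g ∈ Fv, (A.mulVec f i).coeff g = 0 :=
  Iff.rfl

lemma mem_kerAll {A : Matrix (Fin d) (Fin d) (MonoidAlgebra ℂ G)} {Fs : Finset G}
    {f : Fin d → MonoidAlgebra ℂ G} :
    f ∈ kerAll A Fs ↔ (∀ i, (f i).coeff.support ⊆ Fs) ∧ A.mulVec f = 0 :=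
  Iff.rfl

lemma kerAll_eq_kerOn_inf_suppIn
    {A : Matrix (Fin d) (Fin d) (MonoidAlgebra ℂ G)} {B Ω Fs Fv : Finset G}
    (hA : ∀ i j, (A i j).coeff.support ⊆ B) (hΩ : Ω ⊆ Fs)
    (hBΩ : ∀ b ∈ B, ∀ x ∈ Ω, b * x ∈ Fv) :
    kerAll A Ω = kerOn A Fs Fv ⊓ suppIn d Ω := by
  ext f
  rw [Submodule.mem_inf, mem_kerAll, mem_kerOn, mem_suppIn]
  constructor
  · rintro ⟨hf, hAf⟩
    exact ⟨⟨fun i => (hf i).trans hΩ, fun i g _ => by rw [hAf]; rfl⟩, hf⟩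
  · rintro ⟨⟨-, hvanish⟩, hf⟩
    classical
    refine ⟨hf, ?_⟩
    ext i g
    by_cases hg : g ∈ Fv
    · exact hvanish i g hg
    · refine Finsupp.notMem_support_iff.1 fun hmem => hg ?_
      obtain ⟨b, hb, x, hx, rfl⟩ :=
        Finset.mem_mul.1 (MonoidAlgebra.support_coeff_mulVec_subset hA hf i hmem)
      exact hBΩ b hb x hx

end Kernels

theorem W_eq_V_inter_and_dim_bounds_general {G : Type*} [Group G] (S : Finset G)
    (d w : ℕ) (A : Matrix (Fin d) (Fin d) (MonoidAlgebra ℂ G))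
    (hA : ∀ i j, (A i j).coeff.support ⊆ wball S w) (F : Finset G) :
    WSpace S w A F = VSpace A F ⊓ suppIn d (winter S w F) ∧
    WSpace S w A F = ZSpace S w A F ⊓ suppIn d (winter S w F) ∧
    Module.finrank ℂ (VSpace A F) ≤
      Module.finrank ℂ (WSpace S w A F) + d * (F.card - (winter S w F).card) ∧
    Module.finrank ℂ (ZSpace S w A F) ≤
      Module.finrank ℂ (WSpace S w A F) + d * ((wnbhd S w F).card - (winter S w F).card) := by
  have hV : WSpace S w A F = VSpace A F ⊓ suppIn d (winter S w F) :=
    kerAll_eq_kerOn_inf_suppIn hA (winter_subset S w F)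
      (mul_mem_of_mem_wball_of_mem_winter S w F)
  have hZ : WSpace S w A F = ZSpace S w A F ⊓ suppIn d (winter S w F) :=
    kerAll_eq_kerOn_inf_suppIn hA (winter_subset_wnbhd S w F)
      (mul_mem_of_mem_wball_of_mem_winter S w F)
  refine ⟨hV, hZ, ?_, ?_⟩
  · rw [hV]
    exact finrank_le_finrank_inf_suppIn_add _ (winter_subset S w F) fun _ hf => hf.1
  · rw [hZ]
    exact finrank_le_finrank_inf_suppIn_add _ (winter_subset_wnbhd S w F) fun _ hf => hf.1

theorem W_eq_V_inter_and_dim_bounds {G : Type*} [Group G] (S : Finset G) (hS : IsSymmGen S)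
    (d w : ℕ) (A : Matrix (Fin d) (Fin d) (MonoidAlgebra ℂ G))
    (hA : ∀ i j, (A i j).coeff.support ⊆ wball S w) (F : Finset G) :
    WSpace S w A F = VSpace A F ⊓ suppIn d (winter S w F) ∧
    WSpace S w A F = ZSpace S w A F ⊓ suppIn d (winter S w F) ∧
    Module.finrank ℂ (VSpace A F) ≤
      Module.finrank ℂ (WSpace S w A F) + d * (F.card - (winter S w F).card) ∧
    Module.finrank ℂ (ZSpace S w A F) ≤
      Module.finrank ℂ (WSpace S w A F) + d * ((wnbhd S w F).card - (winter S w F).card) :=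
  W_eq_V_inter_and_dim_bounds_general S d w A hA F
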